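/- Let P be a finite set with #P ≠ 3 and let K₁ = { {p} | p ∈ P }. Let K be a cell over P such that every port of P is flexible for K and the Hamming diameter of K is 2. Then K is a Kekulé cell over P if and only if there exists g ⊆ P such that K = g ⊕ K₁. -/

import Mathlib

/-!
Any two Kekulé port assignments of a graph have the same parity: counting the incidences
between the nodes of `G` and the edges of a Kekulé state `W` gives
`#(W|P) + #(internal nodes) = 2 * #W`. In a Kekulé cell of diameter 2 any two assignments
therefore differ in exactly 0 or 2 ports. Fixing `k₀ ∈ K`, the differences `k ⊕ k₀` (`k ≠ k₀`)
are pairs which pairwise meet (two disjoint ones would give distance 4) and, by flexibility,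
cover `P`. Pairwise meeting pairs share a common point `c` unless they form a triangle, and a
covering triangle would force `#P = 3`. Hence `K = (k₀ ⊕ {c}) ⊕ K₁`.

Conversely, `g ⊕ K₁` is realised by a star: a centre joined to each port `p ∉ g` directly and to
each port `p ∈ g` through one extra node. A Kekulé state covers the centre by exactly one spoke,
towards some port `q`, and then covers each extra node by its spoke or by its pendant edge; the
resulting port assignment is `g ⊕ {q}`.
-/

open scoped symmDiff

namespace Kekule

abbrev Node := ℕ
abbrev Graph := Finset (Finset Node)

/-- `G` is a graph: every edge is a 2-element set of nodes. -/
def IsGraph (G : Graph) : Prop := ∀ e ∈ G, e.card = 2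

/-- The nodes of a graph: the elements of its edges. -/
def nodes (G : Graph) : Finset Node := G.biUnion id

/-- The number of edges of `G` containing `v`. -/
def deg (G : Graph) (v : Node) : ℕ := (G.filter (fun e => v ∈ e)).card

/-- A port is a node contained in exactly one edge. -/
def ports (G : Graph) : Finset Node := (nodes G).filter (fun v => deg G v = 1)

/-- An internal node is a node that is not a port. -/
def internal (G : Graph) : Finset Node := (nodes G).filter (fun v => deg G v ≠ 1)

/-- A Kekulé state of `G`: a subgraph `W ⊆ G` such that every internal node
of `G` lies in exactly one edge of `W`. -/
def IsKekule (G W : Graph) : Prop := W ⊆ G ∧ ∀ v ∈ internal G, deg W v = 1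

/-- A curve in `G`: a subgraph `C ⊆ G` such that every node of `C` that is
internal in `G` lies in exactly two edges of `C`. -/
def IsCurve (G C : Graph) : Prop :=
  C ⊆ G ∧ ∀ v ∈ nodes C, v ∈ internal G → deg C v = 2

/-- `(C, W)` is an alternating curve in `G`: both are subgraphs of `G`,
`C` is a curve in `G`, and `W ∩ C` is a Kekulé state of `C`. -/
def IsAlternating (G C W : Graph) : Prop :=
  W ⊆ G ∧ IsCurve G C ∧ IsKekule C (W ∩ C)

/-- `W|P`: the set of ports in `P` that lie in some edge of `W`. -/
def rest (W : Graph) (P : Finset Node) : Finset Node := P ∩ nodes W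

/-- The set of Kekulé port assignments of `G`. -/
def KP (G : Graph) : Set (Finset Node) :=
  {g | ∃ W, IsKekule G W ∧ rest W (ports G) = g}

/-- A cell `K` over `P` is a Kekulé cell if it is the set of Kekulé port
assignments of some graph with port set `P`. -/
def IsKekuleCell (P : Finset Node) (K : Set (Finset Node)) : Prop :=
  ∃ G, IsGraph G ∧ ports G = P ∧ KP G = K

/-- A channel: a 2-element subset of `P`. -/
def IsChannel (P : Finset Node) (c : Finset Node) : Prop := c ⊆ P ∧ c.card = 2

/-- A port `p` is flexible for a cell `K`. -/
def Flexible (K : Set (Finset Node)) (p : Node) : Prop :=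
  ∃ g ∈ K, ∃ g' ∈ K, p ∈ g ∧ p ∉ g'

/-- Hamming distance between two port assignments. -/
def hdist (k k' : Finset Node) : ℕ := (k ∆ k').card

/-- The Hamming diameter of `K` equals `n`. -/
def HamDiamEq (K : Set (Finset Node)) (n : ℕ) : Prop :=
  (∃ k ∈ K, ∃ k' ∈ K, hdist k k' = n) ∧ ∀ k ∈ K, ∀ k' ∈ K, hdist k k' ≤ n

/-- `G` is connected: nonempty, and any two distinct nodes are joined by a walk. -/
def Connected (G : Graph) : Prop :=
  G.Nonempty ∧ ∀ p ∈ nodes G, ∀ q ∈ nodes G, p ≠ q →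
    ∃ (n : ℕ) (f : ℕ → Node), f 0 = p ∧ f n = q ∧
      ∀ i < n, ({f i, f (i + 1)} : Finset Node) ∈ G

/-- `C` is a simple path between `p` and `q`. -/
def IsSimplePath (C : Graph) (p q : Node) : Prop :=
  Connected C ∧ ports C = {p, q} ∧
    ∀ v ∈ nodes C, v ≠ p → v ≠ q → deg C v = 2

/-- A cycle: a connected graph all of whose nodes lie in exactly two edges. -/
def IsCycle (C : Graph) : Prop :=
  Connected C ∧ ∀ v ∈ nodes C, deg C v = 2

/-- A semi-Kekulé state of `G`: every internal node of `G` lies in an odd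
number of edges of `W`. -/
def IsSemiKekule (G W : Graph) : Prop :=
  W ⊆ G ∧ ∀ v ∈ internal G, deg W v % 2 = 1

/-- The signature of `G`. -/
def sig (G : Graph) : ℕ := (internal G).card % 2

/-- `G` is omniconjugated. -/
def Omniconjugated (G : Graph) : Prop :=
  2 ≤ (ports G).card ∧ KP G = {g | g ⊆ ports G ∧ g.card % 2 = sig G}

instance : Std.Commutative (α := Finset Node) (· ∆ ·) := ⟨symmDiff_comm⟩
instance : Std.Associative (α := Finset Node) (· ∆ ·) := ⟨symmDiff_assoc⟩

/-- The `⊕`-sum of a finite family of port assignments. -/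
def xorSum (D : Finset (Finset Node)) : Finset Node := D.fold (· ∆ ·) ∅ id

end Kekule

open Finset

namespace Finset

variable {α : Type*} [DecidableEq α]

theorem card_symmDiff_add_two_mul_card_inter (s t : Finset α) :
    #(s ∆ t) + 2 * #(s ∩ t) = #s + #t := by
  have hsub : s ∩ t ⊆ s ∪ t := inter_subset_left.trans subset_union_left
  rw [symmDiff_eq_sup_sdiff_inf, sup_eq_union, inf_eq_inter, card_sdiff_of_subset hsub,
    ← card_union_add_card_inter s t]
  have := card_le_card hsub
  omega

theorem singleton_symmDiff_singleton {a b : α} (h : a ≠ b) : ({a} : Finset α) ∆ {b} = {a, b} := by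
  rw [symmDiff_eq_union (disjoint_singleton.2 h), insert_eq]

theorem exists_eq_pair_of_mem {e : Finset α} {x : α} (he : #e = 2) (hx : x ∈ e) :
    ∃ y, y ≠ x ∧ e = {x, y} := by
  obtain ⟨a, b, hab, rfl⟩ := card_eq_two.1 he
  rcases mem_insert.1 hx with rfl | hx
  · exact ⟨b, hab.symm, rfl⟩
  · rw [mem_singleton.1 hx]
    exact ⟨a, hab, pair_comm a b⟩

theorem mem_of_not_disjoint_pair {a b : α} {s : Finset α} (h : ¬Disjoint {a, b} s) (ha : a ∉ s) :
    b ∈ s := by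
  by_contra hb
  exact h (by simp [ha, hb])

theorem mem_of_not_disjoint_pairs {a b c p q : α} (hab : a ≠ b) (hac : a ≠ c) (hbc : b ≠ c)
    (h₁ : ¬Disjoint ({p, q} : Finset α) {a, b}) (h₂ : ¬Disjoint ({p, q} : Finset α) {b, c})
    (h₃ : ¬Disjoint ({p, q} : Finset α) {a, c}) :
    p ∈ ({a, b, c} : Finset α) := by
  simp only [disjoint_insert_left, disjoint_insert_right, disjoint_singleton] at h₁ h₂ h₃
  grind

theorem _root_.Set.Intersecting.exists_mem_forall_mem {P : Finset α} {S : Set (Finset α)}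
    (hS : S.Intersecting) (hne : S.Nonempty) (hcard : ∀ e ∈ S, #e = 2) (hsub : ∀ e ∈ S, e ⊆ P)
    (hcover : ∀ p ∈ P, ∃ e ∈ S, p ∈ e) (hP : #P ≠ 3) : ∃ c ∈ P, ∀ e ∈ S, c ∈ e := by
  obtain ⟨e₀, he₀⟩ := hne
  obtain ⟨a, b, hab, rfl⟩ := card_eq_two.1 (hcard _ he₀)
  by_contra! h
  obtain ⟨ea, hea, hae⟩ := h a (hsub _ he₀ (by simp))
  obtain ⟨eb, heb, hbe⟩ := h b (hsub _ he₀ (by simp))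
  obtain ⟨c, hcb, rfl⟩ := exists_eq_pair_of_mem (hcard _ hea)
    (mem_of_not_disjoint_pair (hS he₀ hea) hae)
  obtain ⟨d, hda, rfl⟩ := exists_eq_pair_of_mem (hcard _ heb)
    (mem_of_not_disjoint_pair (by rw [pair_comm]; exact hS he₀ heb) hbe)
  have hac : a ≠ c := by simp_all
  obtain rfl : c = d := by simpa [hac.symm] using mem_of_not_disjoint_pair (hS hea heb) hbe
  refine hP (card_eq_three.2 ⟨a, b, c, hab, hac, hcb.symm, ?_⟩)
  ext p
  refine ⟨fun hp => ?_, fun hp => ?_⟩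
  · obtain ⟨e, he, hpe⟩ := hcover p hp
    obtain ⟨q, -, rfl⟩ := exists_eq_pair_of_mem (hcard _ he) hpe
    exact mem_of_not_disjoint_pairs hab hac hcb.symm (hS he he₀) (hS he hea) (hS he heb)
  · simp only [mem_insert, mem_singleton] at hp
    rcases hp with rfl | rfl | rfl
    exacts [hsub _ he₀ (by simp), hsub _ he₀ (by simp), hsub _ hea (by simp)]

end Finset

namespace Kekule

theorem hdist_symmDiff_symmDiff (g a b : Finset Node) : hdist (g ∆ a) (g ∆ b) = hdist a b := by
  rw [hdist, hdist, symmDiff_symmDiff_symmDiff_comm, symmDiff_self, bot_symmDiff]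

theorem hdist_empty (k : Finset Node) : hdist k ∅ = #k := by
  rw [hdist, ← bot_eq_empty, symmDiff_bot]

theorem Flexible.image_symmDiff {K : Set (Finset Node)} {p : Node} (g : Finset Node)
    (h : Flexible K p) : Flexible ((g ∆ ·) '' K) p := by
  obtain ⟨a, ha, b, hb, hpa, hpb⟩ := h
  by_cases hpg : p ∈ g
  · exact ⟨g ∆ b, Set.mem_image_of_mem _ hb, g ∆ a, Set.mem_image_of_mem _ ha,
      by simp [mem_symmDiff, *], by simp [mem_symmDiff, *]⟩
  · exact ⟨g ∆ a, Set.mem_image_of_mem _ ha, g ∆ b, Set.mem_image_of_mem _ hb,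
      by simp [mem_symmDiff, *], by simp [mem_symmDiff, *]⟩

theorem HamDiamEq.image_symmDiff {K : Set (Finset Node)} {n : ℕ} (g : Finset Node)
    (h : HamDiamEq K n) : HamDiamEq ((g ∆ ·) '' K) n := by
  obtain ⟨⟨k, hk, k', hk', hkk'⟩, hle⟩ := h
  refine ⟨⟨_, Set.mem_image_of_mem _ hk, _, Set.mem_image_of_mem _ hk', ?_⟩, ?_⟩
  · rwa [hdist_symmDiff_symmDiff]
  · rintro _ ⟨a, ha, rfl⟩ _ ⟨b, hb, rfl⟩
    rw [hdist_symmDiff_symmDiff]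
    exact hle a ha b hb

theorem not_disjoint_of_hdist_le_two {k k' : Finset Node} (hk : #k = 2) (hk' : #k' = 2)
    (h : hdist k k' ≤ 2) : ¬Disjoint k k' := by
  intro hdisj
  have := card_symmDiff_add_two_mul_card_inter k k'
  rw [disjoint_iff_inter_eq_empty.1 hdisj, card_empty, hk, hk'] at this
  rw [hdist] at h
  omega

theorem exists_eq_image_singletons_of_empty_mem {P : Finset Node} (hP : #P ≠ 3)
    {L : Set (Finset Node)} (hLP : ∀ k ∈ L, k ⊆ P) (hL₀ : ∅ ∈ L)
    (hflex : ∀ p ∈ P, Flexible L p) (hdiam : HamDiamEq L 2)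
    (heven : ∀ k ∈ L, ∀ k' ∈ L, Even (hdist k k')) :
    ∃ c ∈ P, L = ({c} ∆ ·) '' {k | ∃ p ∈ P, k = {p}} := by
  have hcard : ∀ k ∈ L, k ≠ ∅ → #k = 2 := by
    intro k hk hne
    have hle := hdiam.2 k hk ∅ hL₀
    obtain ⟨m, hm⟩ := heven k hk ∅ hL₀
    rw [hdist_empty] at hle hm
    have := card_ne_zero.2 (nonempty_iff_ne_empty.2 hne)
    omega
  set S := {k ∈ L | k ≠ ∅}
  have hS : S.Intersecting := fun k ⟨hk, hk₀⟩ k' ⟨hk', hk'₀⟩ =>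
    not_disjoint_of_hdist_le_two (hcard k hk hk₀) (hcard k' hk' hk'₀) (hdiam.2 k hk k' hk')
  have hSne : S.Nonempty := by
    obtain ⟨k, hk, k', hk', hkk'⟩ := hdiam.1
    by_cases hk₀ : k = ∅
    · refine ⟨k', hk', fun hk'₀ => ?_⟩
      simp [hk₀, hk'₀, hdist] at hkk'
    · exact ⟨k, hk, hk₀⟩
  have hcover : ∀ p ∈ P, ∃ k ∈ S, p ∈ k := by
    intro p hp
    obtain ⟨k, hk, -, -, hpk, -⟩ := hflex p hp
    exact ⟨k, ⟨hk, ne_empty_of_mem hpk⟩, hpk⟩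
  obtain ⟨c, hcP, hc⟩ := hS.exists_mem_forall_mem hSne (fun k hk => hcard k hk.1 hk.2)
    (fun k hk => hLP k hk.1) hcover hP
  refine ⟨c, hcP, Set.ext fun k => ⟨fun hk => ?_, ?_⟩⟩
  · by_cases hk₀ : k = ∅
    · exact ⟨{c}, ⟨c, hcP, rfl⟩, by simp [hk₀]⟩
    · obtain ⟨q, hqc, rfl⟩ := exists_eq_pair_of_mem (hcard k hk hk₀) (hc k ⟨hk, hk₀⟩)
      exact ⟨{q}, ⟨q, hLP _ hk (by simp), rfl⟩, singleton_symmDiff_singleton hqc.symm⟩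
  · rintro ⟨_, ⟨p, hp, rfl⟩, rfl⟩
    by_cases hpc : p = c
    · simpa [hpc] using hL₀
    · obtain ⟨k, hk, hpk⟩ := hcover p hp
      obtain ⟨q, -, rfl⟩ := exists_eq_pair_of_mem (hcard k hk.1 hk.2) (hc k hk)
      obtain rfl : p = q := by simpa [hpc] using hpk
      rw [← singleton_symmDiff_singleton (Ne.symm hpc)] at hk
      exact hk.1

theorem exists_eq_image_singletons {P : Finset Node} (hP : #P ≠ 3) {K : Set (Finset Node)}
    (hKP : ∀ k ∈ K, k ⊆ P) (hflex : ∀ p ∈ P, Flexible K p) (hdiam : HamDiamEq K 2)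
    (heven : ∀ k ∈ K, ∀ k' ∈ K, Even (hdist k k')) :
    ∃ g ⊆ P, K = (g ∆ ·) '' {k | ∃ p ∈ P, k = {p}} := by
  obtain ⟨k₀, hk₀, -⟩ := hdiam.1
  have hsubP : ∀ {a b}, a ⊆ P → b ⊆ P → a ∆ b ⊆ P := fun ha hb =>
    symmDiff_subset_union.trans (union_subset ha hb)
  obtain ⟨c, hcP, hc⟩ := exists_eq_image_singletons_of_empty_mem hP (L := (k₀ ∆ ·) '' K)
    (by rintro _ ⟨k, hk, rfl⟩; exact hsubP (hKP k₀ hk₀) (hKP k hk))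
    ⟨k₀, hk₀, by simp⟩
    (fun p hp => (hflex p hp).image_symmDiff k₀) (hdiam.image_symmDiff k₀)
    (by
      rintro _ ⟨k, hk, rfl⟩ _ ⟨k', hk', rfl⟩
      rw [hdist_symmDiff_symmDiff]
      exact heven k hk k' hk')
  refine ⟨k₀ ∆ {c}, hsubP (hKP k₀ hk₀) (by simpa using hcP), ?_⟩
  calc K = (k₀ ∆ ·) '' ((k₀ ∆ ·) '' K) := by
        simp only [Set.image_image, symmDiff_symmDiff_cancel_left, Set.image_id']
    _ = _ := by simp only [hc, Set.image_image, symmDiff_assoc]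

theorem mem_nodes {G : Graph} {v : Node} : v ∈ nodes G ↔ ∃ e ∈ G, v ∈ e := by
  simp [nodes]

theorem deg_pos_iff {W : Graph} {v : Node} : 0 < deg W v ↔ v ∈ nodes W := by
  simp [deg, card_pos, filter_nonempty_iff, mem_nodes]

theorem deg_mono {W G : Graph} (h : W ⊆ G) (v : Node) : deg W v ≤ deg G v :=
  card_le_card (filter_subset_filter _ h)

theorem sum_deg_eq_two_mul_card {G W : Graph} (hG : IsGraph G) (hWG : W ⊆ G) :
    ∑ v ∈ nodes G, deg W v = 2 * #W :=
  calc ∑ v ∈ nodes G, deg W v = ∑ e ∈ W, #{v ∈ nodes G | v ∈ e} :=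
        sum_card_bipartiteAbove_eq_sum_card_bipartiteBelow (fun v e => v ∈ e)
    _ = ∑ _e ∈ W, 2 := sum_congr rfl fun e he => by
        have hsub : e ⊆ nodes G := subset_biUnion_of_mem id (hWG he)
        rw [filter_mem_eq_inter, inter_eq_right.2 hsub, hG e (hWG he)]
    _ = 2 * #W := by rw [sum_const, smul_eq_mul, mul_comm]

theorem card_rest_add_card_internal {G W : Graph} (hG : IsGraph G) (hW : IsKekule G W) :
    #(rest W (ports G)) + #(internal G) = 2 * #W := by
  obtain ⟨hWG, hdeg⟩ := hW
  have hport : ∀ v ∈ ports G, deg W v = if v ∈ nodes W then 1 else 0 := by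
    intro v hv
    have := deg_mono hWG v
    have := (mem_filter.1 hv).2
    split_ifs with hvW
    · have := deg_pos_iff.2 hvW
      omega
    · exact Nat.eq_zero_of_not_pos (mt deg_pos_iff.1 hvW)
  rw [← sum_deg_eq_two_mul_card hG hWG, ← sum_filter_add_sum_filter_not _ (fun v => deg G v = 1)]
  change _ = ∑ v ∈ ports G, deg W v + ∑ v ∈ internal G, deg W v
  rw [sum_congr rfl hport, sum_congr rfl hdeg, sum_boole, filter_mem_eq_inter, rest,
    card_eq_sum_ones]
  simp

theorem even_hdist_of_mem_KP {G : Graph} (hG : IsGraph G) {k k' : Finset Node} (hk : k ∈ KP G)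
    (hk' : k' ∈ KP G) : Even (hdist k k') := by
  obtain ⟨W, hW, rfl⟩ := hk
  obtain ⟨W', hW', rfl⟩ := hk'
  have := card_rest_add_card_internal hG hW
  have := card_rest_add_card_internal hG hW'
  have := card_symmDiff_add_two_mul_card_inter (rest W (ports G)) (rest W' (ports G))
  rw [hdist, Nat.even_iff]
  omega

def center (P : Finset Node) : Node := P.sup id + 1

def aux (P : Finset Node) (p : Node) : Node := center P + 1 + p

def spoke (P g : Finset Node) (p : Node) : Finset Node :=
  {center P, if p ∈ g then aux P p else p}

def tip (P : Finset Node) (p : Node) : Finset Node := {aux P p, p}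

/-- The spokes towards the ports in `Q` and the pendant edges at the ports in `T`: the star is
`starGraph P g P g`, and its Kekulé states turn out to be the `starGraph P g {q} (g.erase q)`. -/
def starGraph (P g Q T : Finset Node) : Graph := Q.image (spoke P g) ∪ T.image (tip P)

section StarGraph

variable {P g Q T : Finset Node} {p q v : Node}

theorem lt_center (hp : p ∈ P) : p < center P :=
  Nat.lt_succ_of_le (le_sup (f := id) hp)

theorem center_mem_spoke : center P ∈ spoke P g p := mem_insert_self _ _

theorem center_notMem_tip (hp : p ∈ P) : center P ∉ tip P p := by
  have := lt_center hp
  simp only [tip, aux, mem_insert, mem_singleton]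
  lia

theorem aux_mem_spoke_iff (hq : q ∈ P) : aux P p ∈ spoke P g q ↔ p = q ∧ q ∈ g := by
  have := lt_center hq
  by_cases hqg : q ∈ g <;> simp only [spoke, aux, hqg, if_true, if_false, mem_insert, mem_singleton,
    and_true, and_false] <;> lia

theorem aux_mem_tip_iff (hq : q ∈ P) : aux P p ∈ tip P q ↔ p = q := by
  have := lt_center hq
  simp only [tip, aux, mem_insert, mem_singleton]
  lia

theorem port_mem_spoke_iff (hp : p ∈ P) (hq : q ∈ P) : p ∈ spoke P g q ↔ p = q ∧ q ∉ g := by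
  have := lt_center hp
  have := lt_center hq
  by_cases hqg : q ∈ g <;> simp only [spoke, aux, hqg, if_true, if_false, mem_insert, mem_singleton,
    not_true, not_false_eq_true, and_true, and_false] <;> lia

theorem port_mem_tip_iff (hp : p ∈ P) (hq : q ∈ P) : p ∈ tip P q ↔ p = q := by
  have := lt_center hp
  have := lt_center hq
  simp only [tip, aux, mem_insert, mem_singleton]
  lia

theorem mem_spoke : v ∈ spoke P g q ↔ v = center P ∨ q ∈ g ∧ v = aux P q ∨ q ∉ g ∧ v = q := by
  by_cases hqg : q ∈ g <;> simp [spoke, hqg]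

theorem isGraph_starGraph (hg : g ⊆ P) : IsGraph (starGraph P g P g) := by
  intro e he
  simp only [starGraph, mem_union, mem_image] at he
  rcases he with ⟨q, hq, rfl⟩ | ⟨p, hp, rfl⟩
  · refine card_pair fun h => ?_
    have := lt_center hq
    split_ifs at h
    · simp only [aux] at h
      lia
    · lia
  · refine card_pair fun h => ?_
    have := lt_center (hg hp)
    simp only [aux] at h
    lia

theorem deg_starGraph (hQ : Q ⊆ P) (hT : T ⊆ P) (v : Node) :
    deg (starGraph P g Q T) v =
      (∑ q ∈ Q, if v ∈ spoke P g q then 1 else 0) + ∑ p ∈ T, if v ∈ tip P p then 1 else 0 := by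
  have hspoke : Set.InjOn (spoke P g) Q := by
    intro p hp q hq h
    by_cases hpg : p ∈ g
    · exact ((aux_mem_spoke_iff (hQ hq)).1 (h ▸ (aux_mem_spoke_iff (hQ hp)).2 ⟨rfl, hpg⟩)).1
    · exact ((port_mem_spoke_iff (hQ hp) (hQ hq)).1
        (h ▸ (port_mem_spoke_iff (hQ hp) (hQ hp)).2 ⟨rfl, hpg⟩)).1
  have htip : Set.InjOn (tip P) T := fun p hp q hq h =>
    (port_mem_tip_iff (hT hp) (hT hq)).1 (h ▸ (port_mem_tip_iff (hT hp) (hT hp)).2 rfl)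
  have hdisj : Disjoint (Q.image (spoke P g)) (T.image (tip P)) := by
    simp only [disjoint_left, mem_image]
    rintro _ ⟨q, -, rfl⟩ ⟨p, hp, h⟩
    exact center_notMem_tip (hT hp) (h ▸ center_mem_spoke)
  rw [deg, card_filter, starGraph, sum_union hdisj, sum_image hspoke, sum_image htip]

theorem deg_starGraph_center (hQ : Q ⊆ P) (hT : T ⊆ P) :
    deg (starGraph P g Q T) (center P) = #Q := by
  rw [deg_starGraph hQ hT, sum_congr rfl fun p hp => if_neg (center_notMem_tip (hT hp))]
  simp [center_mem_spoke]

theorem deg_starGraph_aux (hQ : Q ⊆ P) (hT : T ⊆ P) (hp : p ∈ g) :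
    deg (starGraph P g Q T) (aux P p) = (if p ∈ Q then 1 else 0) + if p ∈ T then 1 else 0 := by
  rw [deg_starGraph hQ hT, ← sum_ite_eq Q p (fun _ => 1), ← sum_ite_eq T p (fun _ => 1)]
  congr 1 <;> refine sum_congr rfl fun q hq => ?_
  · simp only [aux_mem_spoke_iff (hQ hq)]
    grind
  · simp only [aux_mem_tip_iff (hT hq)]

theorem deg_starGraph_of_mem (hQ : Q ⊆ P) (hT : T ⊆ P) (hp : p ∈ P) :
    deg (starGraph P g Q T) p = (if p ∈ Q ∧ p ∉ g then 1 else 0) + if p ∈ T then 1 else 0 := by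
  rw [deg_starGraph hQ hT, ite_and, ← sum_ite_eq Q p (fun _ => if p ∉ g then 1 else 0),
    ← sum_ite_eq T p (fun _ => 1)]
  congr 1 <;> refine sum_congr rfl fun q hq => ?_
  · simp only [port_mem_spoke_iff hp (hQ hq)]
    grind
  · simp only [port_mem_tip_iff hp (hT hq)]

theorem mem_nodes_starGraph (hg : g ⊆ P) (hv : v ∈ nodes (starGraph P g P g)) :
    v = center P ∨ v ∈ P ∨ ∃ p ∈ g, v = aux P p := by
  obtain ⟨e, he, hve⟩ := mem_nodes.1 hv
  simp only [starGraph, mem_union, mem_image] at he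
  rcases he with ⟨q, hq, rfl⟩ | ⟨p, hp, rfl⟩
  · rcases mem_spoke.1 hve with h | ⟨hq', h⟩ | ⟨-, h⟩
    exacts [Or.inl h, Or.inr (Or.inr ⟨q, hq', h⟩), Or.inr (Or.inl (h ▸ hq))]
  · simp only [tip, mem_insert, mem_singleton] at hve
    rcases hve with h | h
    exacts [Or.inr (Or.inr ⟨p, hp, h⟩), Or.inr (Or.inl (h ▸ hg hp))]

theorem starGraph_filter_mem_eq {W : Graph} (hW : W ⊆ starGraph P g P g) :
    starGraph P g {q ∈ P | spoke P g q ∈ W} {p ∈ g | tip P p ∈ W} = W := by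
  ext e
  simp only [starGraph, mem_union, mem_image, mem_filter]
  refine ⟨?_, fun he => ?_⟩
  · rintro (⟨q, ⟨-, h⟩, rfl⟩ | ⟨p, ⟨-, h⟩, rfl⟩) <;> exact h
  · have := hW he
    simp only [starGraph, mem_union, mem_image] at this
    rcases this with ⟨q, hq, rfl⟩ | ⟨p, hp, rfl⟩
    exacts [Or.inl ⟨q, ⟨hq, he⟩, rfl⟩, Or.inr ⟨p, ⟨hp, he⟩, rfl⟩]

variable (hg : g ⊆ P)
include hg

theorem deg_starGraph_self_of_mem (hp : p ∈ P) : deg (starGraph P g P g) p = 1 := by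
  rw [deg_starGraph_of_mem subset_rfl hg hp]
  by_cases hpg : p ∈ g <;> simp [hp, hpg]

theorem deg_starGraph_self_aux (hp : p ∈ g) : deg (starGraph P g P g) (aux P p) = 2 := by
  rw [deg_starGraph_aux subset_rfl hg hp]
  simp [hp, hg hp]

theorem rest_starGraph (hq : q ∈ P) : rest (starGraph P g {q} (g.erase q)) P = g ∆ {q} := by
  ext v
  simp only [rest, mem_inter, mem_symmDiff, mem_singleton]
  by_cases hv : v ∈ P
  · rw [← deg_pos_iff, deg_starGraph_of_mem (singleton_subset_iff.2 hq)
      ((erase_subset _ _).trans hg) hv]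
    rcases eq_or_ne v q with rfl | hvq <;> by_cases hvg : v ∈ g <;> simp [*]
  · simp only [hv, false_and, false_iff]
    rintro (⟨h, -⟩ | ⟨rfl, -⟩)
    exacts [hv (hg h), hv hq]

variable (h2 : 2 ≤ #P)
include h2

theorem ports_starGraph : ports (starGraph P g P g) = P := by
  ext v
  simp only [ports, mem_filter]
  refine ⟨fun ⟨hv, hdeg⟩ => ?_, fun hv => ?_⟩
  · rcases mem_nodes_starGraph hg hv with rfl | hvP | ⟨p, hp, rfl⟩
    · rw [deg_starGraph_center subset_rfl hg] at hdeg
      lia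
    · exact hvP
    · rw [deg_starGraph_self_aux hg hp] at hdeg
      lia
  · have hdeg := deg_starGraph_self_of_mem hg hv
    exact ⟨deg_pos_iff.1 (by lia), hdeg⟩

theorem mem_internal_starGraph :
    v ∈ internal (starGraph P g P g) ↔ v = center P ∨ ∃ p ∈ g, v = aux P p := by
  simp only [internal, mem_filter]
  refine ⟨fun ⟨hv, hdeg⟩ => ?_, fun hv => ?_⟩
  · rcases mem_nodes_starGraph hg hv with h | hvP | h
    · exact Or.inl h
    · exact absurd (deg_starGraph_self_of_mem hg hvP) hdeg
    · exact Or.inr h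
  · have hdeg : 2 ≤ deg (starGraph P g P g) v := by
      rcases hv with rfl | ⟨p, hp, rfl⟩
      · rwa [deg_starGraph_center subset_rfl hg]
      · rw [deg_starGraph_self_aux hg hp]
    exact ⟨deg_pos_iff.1 (by lia), by lia⟩

theorem isKekule_starGraph (hq : q ∈ P) :
    IsKekule (starGraph P g P g) (starGraph P g {q} (g.erase q)) := by
  have hQ : {q} ⊆ P := singleton_subset_iff.2 hq
  refine ⟨union_subset_union (image_subset_image hQ) (image_subset_image (erase_subset q g)),
    fun v hv => ?_⟩
  rcases (mem_internal_starGraph hg h2).1 hv with rfl | ⟨p, hp, rfl⟩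
  · rw [deg_starGraph_center hQ ((erase_subset q g).trans hg), card_singleton]
  · rw [deg_starGraph_aux hQ ((erase_subset q g).trans hg) hp]
    by_cases hpq : p = q <;> simp [hpq, hp]

theorem exists_eq_starGraph_of_isKekule {W : Graph} (hW : IsKekule (starGraph P g P g) W) :
    ∃ q ∈ P, W = starGraph P g {q} (g.erase q) := by
  obtain ⟨hWG, hdeg⟩ := hW
  have hWQT := starGraph_filter_mem_eq hWG
  set Q := {q ∈ P | spoke P g q ∈ W}
  set T := {p ∈ g | tip P p ∈ W}
  have hQ : Q ⊆ P := filter_subset _ _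
  have hT : T ⊆ g := filter_subset _ _
  obtain ⟨q, hQq⟩ : ∃ q, Q = {q} := by
    rw [← card_eq_one, ← deg_starGraph_center hQ (hT.trans hg), hWQT]
    exact hdeg _ ((mem_internal_starGraph hg h2).2 (Or.inl rfl))
  have hdeg_aux : ∀ p ∈ g, (if p = q then 1 else 0) + (if p ∈ T then 1 else 0) = 1 := by
    intro p hp
    have h := deg_starGraph_aux hQ (hT.trans hg) hp
    rw [hWQT, hdeg _ ((mem_internal_starGraph hg h2).2 (Or.inr ⟨p, hp, rfl⟩)), hQq] at h
    simpa using h.symm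
  refine ⟨q, hQ (hQq ▸ mem_singleton_self q), ?_⟩
  rw [← hWQT, hQq]
  congr 1
  ext p
  rw [mem_erase]
  by_cases hp : p ∈ g
  · have := hdeg_aux p hp
    by_cases hpq : p = q <;> by_cases hpT : p ∈ T <;> simp_all
  · exact ⟨fun h => absurd (hT h) hp, fun h => absurd h.2 hp⟩

theorem KP_starGraph : KP (starGraph P g P g) = (g ∆ ·) '' {k | ∃ p ∈ P, k = {p}} := by
  ext k
  constructor
  · rintro ⟨W, hW, rfl⟩
    obtain ⟨q, hq, rfl⟩ := exists_eq_starGraph_of_isKekule hg h2 hW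
    rw [ports_starGraph hg h2, rest_starGraph hg hq]
    exact ⟨{q}, ⟨q, hq, rfl⟩, rfl⟩
  · rintro ⟨_, ⟨q, hq, rfl⟩, rfl⟩
    exact ⟨_, isKekule_starGraph hg h2 hq, by rw [ports_starGraph hg h2, rest_starGraph hg hq]⟩

theorem isKekuleCell_image_singletons :
    IsKekuleCell P ((g ∆ ·) '' {k | ∃ p ∈ P, k = {p}}) :=
  ⟨_, isGraph_starGraph hg, ports_starGraph hg h2, KP_starGraph hg h2⟩

end StarGraph

/-- classification of flexible Kekulé cells of diameter 2 when
`#P ≠ 3`: they are exactly the translates of `K₁ = { {p} | p ∈ P }`. -/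
theorem statement9 (P : Finset Node) (hP : P.card ≠ 3)
    (K : Set (Finset Node)) (hKP : ∀ k ∈ K, k ⊆ P)
    (hflex : ∀ p ∈ P, Flexible K p)
    (hdiam : HamDiamEq K 2) :
    IsKekuleCell P K ↔
      ∃ g : Finset Node, g ⊆ P ∧
        K = (fun k => g ∆ k) '' {k : Finset Node | ∃ p ∈ P, k = {p}} := by
  constructor
  · rintro ⟨G, hG, rfl, rfl⟩
    exact exists_eq_image_singletons hP hKP hflex hdiam fun k hk k' hk' =>
      even_hdist_of_mem_KP hG hk hk'
  · rintro ⟨g, hg, rfl⟩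
    obtain ⟨_, ⟨_, ⟨p, hp, rfl⟩, rfl⟩, _, ⟨_, ⟨q, hq, rfl⟩, rfl⟩, hpq⟩ := hdiam.1
    have hne : p ≠ q := by
      rintro rfl
      simp [hdist] at hpq
    exact isKekuleCell_image_singletons hg (one_lt_card.2 ⟨p, hp, q, hq, hne⟩)

end Kekule
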